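/- arXiv:2010.05124 — 6 statements merged into one kernel-verified Lean document; each statement's English description precedes it below -/
import Mathlib

section
/- Fix 0 ≤ δ < 1 and B, C > 0 with B < B_c, where B_c = 1 + √(1 + 1/C). For each integer n ≥ 1 set p = ⌊n^δ⌋ and let Z^{(n)} = (z_{ij}) be the typical table of P(r̃, c̃) for the margins of M_{n,δ}(B,C). Then there exist a constant K > 0 and N ∈ ℕ such that for all n ≥ N: |z_{11} − B²(C+1)/((B_c − B)(B_c + B − 2))| ≤ K·n^{δ−1} and |z_{1,p+1} − BC| ≤ K·n^{δ−1}. -/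
/-!
`gFun` is a sum of copies of the strictly concave function `gEntry`, so a positive table in the
polytope whose entrywise derivative `gEntryDeriv` splits as `u i + v j` is the unique maximizer.
For the symmetric margins of `M_{n,δ}(B,C)` such a table is constant on the three blocks, with
entries `a, b, d` solving `p a + n b = ⌊BCn⌋`, `p b + n d = ⌊Cn⌋` and `ℓ a + ℓ d = 2 ℓ b`, where
`ℓ = gEntryDeriv`; the intermediate value theorem produces a solution with `a` bounded a priori.
As `p / n ≤ n^{δ-1}`, the margin equations give `b = BC + O(n^{δ-1})` and `d = C + O(n^{δ-1})`,
hence `ℓ a = 2 ℓ(BC) - ℓ C + O(n^{δ-1})`. For `B < B_c` the closed form `A` of the statement is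
positive with `ℓ A = 2 ℓ(BC) - ℓ C`, and `ℓ` is bi-Lipschitz on compact subsets of `(0, ∞)`.
-/

/-- The transportation polytope `P(r, c)`. -/
def transportPolytope {m n : ℕ} (r : Fin m → ℝ) (c : Fin n → ℝ) :
    Set (Fin m → Fin n → ℝ) :=
  {X | (∀ i j, 0 ≤ X i j) ∧ (∀ i, ∑ j, X i j = r i) ∧ (∀ j, ∑ i, X i j = c j)}

/-- The entropy-like functional `g`. -/
noncomputable def gFun {m n : ℕ} (X : Fin m → Fin n → ℝ) : ℝ :=
  ∑ i, ∑ j, ((X i j + 1) * Real.log (X i j + 1) - X i j * Real.log (X i j))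

/-- The margin vector of `M_{n,δ}(B,C)`: first `p` entries equal `R`, last `n` equal `S`. -/
def margin (p n R S : ℕ) : Fin (p + n) → ℝ :=
  fun i => if (i : ℕ) < p then (R : ℝ) else (S : ℝ)

open Real Set Finset Filter Topology

noncomputable def gEntry (x : ℝ) : ℝ := (x + 1) * log (x + 1) - x * log x

noncomputable def gEntryDeriv (x : ℝ) : ℝ := log (x + 1) - log x

lemma gFun_eq_sum_gEntry {m n : ℕ} (X : Fin m → Fin n → ℝ) :
    gFun X = ∑ i, ∑ j, gEntry (X i j) := rfl

lemma continuous_gEntry : Continuous gEntry :=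
  (continuous_mul_log.comp (continuous_add_const 1)).sub continuous_mul_log

lemma hasDerivAt_gEntry {x : ℝ} (hx : 0 < x) : HasDerivAt gEntry (gEntryDeriv x) x := by
  have h₁ := (hasDerivAt_mul_log (by linarith : x + 1 ≠ 0)).comp x
    ((hasDerivAt_id' x).add_const 1)
  exact (h₁.sub (hasDerivAt_mul_log hx.ne')).congr_deriv (by rw [gEntryDeriv]; ring)

lemma continuousOn_gEntryDeriv : ContinuousOn gEntryDeriv (Ioi 0) := by
  intro x (hx : 0 < x)
  exact ((continuousAt_log (by linarith)).comp (continuous_add_const 1).continuousAt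
    |>.sub (continuousAt_log hx.ne')).continuousWithinAt

lemma gEntryDeriv_eq_log_div {x : ℝ} (hx : 0 < x) : gEntryDeriv x = log ((x + 1) / x) := by
  rw [gEntryDeriv, log_div (by linarith) hx.ne']

lemma gEntryDeriv_sub_eq_log {x y : ℝ} (hx : 0 < x) (hy : 0 < y) :
    gEntryDeriv x - gEntryDeriv y = log ((x + 1) * y / (x * (y + 1))) := by
  rw [gEntryDeriv, gEntryDeriv, log_div (by positivity) (by positivity),
    log_mul (by positivity) hy.ne', log_mul hx.ne' (by positivity)]
  ring

lemma gEntryDeriv_pos {x : ℝ} (hx : 0 < x) : 0 < gEntryDeriv x := by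
  have := log_lt_log hx (lt_add_one x)
  rw [gEntryDeriv]; linarith

lemma gEntryDeriv_exp_sub_one_inv {u : ℝ} (hu : 0 < u) : gEntryDeriv (exp u - 1)⁻¹ = u := by
  have h : 0 < exp u - 1 := by linarith [add_one_lt_exp hu.ne']
  rw [gEntryDeriv_eq_log_div (inv_pos.mpr h), add_div, div_self (inv_pos.mpr h).ne', one_div,
    inv_inv, add_sub_cancel, log_exp]

lemma div_le_gEntryDeriv_sub {x y : ℝ} (hx : 0 < x) (hxy : x ≤ y) :
    (y - x) / ((x + 1) * y) ≤ gEntryDeriv x - gEntryDeriv y := by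
  have hy : 0 < y := hx.trans_le hxy
  rw [gEntryDeriv_sub_eq_log hx hy]
  convert one_sub_inv_le_log_of_pos (x := (x + 1) * y / (x * (y + 1))) (by positivity) using 1
  field_simp
  ring

lemma gEntryDeriv_sub_le_div {x y : ℝ} (hx : 0 < x) (hxy : x ≤ y) :
    gEntryDeriv x - gEntryDeriv y ≤ (y - x) / (x * (y + 1)) := by
  have hy : 0 < y := hx.trans_le hxy
  rw [gEntryDeriv_sub_eq_log hx hy]
  convert log_le_sub_one_of_pos (x := (x + 1) * y / (x * (y + 1))) (by positivity) using 1
  field_simp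
  ring

lemma gEntryDeriv_strictAntiOn : StrictAntiOn gEntryDeriv (Ioi 0) := by
  intro x (hx : 0 < x) y (hy : 0 < y) hxy
  have := div_le_gEntryDeriv_sub hx hxy.le
  have : 0 < (y - x) / ((x + 1) * y) := div_pos (by linarith) (by positivity)
  linarith

lemma abs_gEntryDeriv_sub_le {m x y : ℝ} (hm : 0 < m) (hx : m ≤ x) (hy : m ≤ y) :
    |gEntryDeriv x - gEntryDeriv y| ≤ |x - y| / m ^ 2 := by
  wlog hxy : x ≤ y generalizing x y
  · rw [abs_sub_comm, abs_sub_comm x]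
    exact this hy hx (le_of_not_ge hxy)
  have hx0 : 0 < x := hm.trans_le hx
  have hanti := gEntryDeriv_strictAntiOn.antitoneOn hx0 (hx0.trans_le hxy) hxy
  rw [abs_of_nonneg (sub_nonneg.mpr hanti), abs_sub_comm, abs_of_nonneg (sub_nonneg.mpr hxy)]
  calc gEntryDeriv x - gEntryDeriv y ≤ (y - x) / (x * (y + 1)) := gEntryDeriv_sub_le_div hx0 hxy
    _ ≤ (y - x) / m ^ 2 := by
      gcongr
      rw [sq]; exact mul_le_mul hx (by linarith) hm.le hx0.le

lemma abs_sub_le_mul_abs_gEntryDeriv_sub {M x y : ℝ} (hx : 0 < x) (hy : 0 < y) (hxM : x ≤ M)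
    (hyM : y ≤ M) : |x - y| ≤ (M + 1) * M * |gEntryDeriv x - gEntryDeriv y| := by
  wlog hxy : x ≤ y generalizing x y
  · rw [abs_sub_comm, abs_sub_comm (gEntryDeriv x)]
    exact this hy hx hyM hxM (le_of_not_ge hxy)
  rw [abs_of_nonneg (sub_nonneg.mpr (gEntryDeriv_strictAntiOn.antitoneOn hx hy hxy)),
    abs_sub_comm, abs_of_nonneg (sub_nonneg.mpr hxy)]
  have h := div_le_gEntryDeriv_sub hx hxy
  rw [div_le_iff₀ (by positivity)] at h
  calc y - x ≤ (gEntryDeriv x - gEntryDeriv y) * ((x + 1) * y) := h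
    _ ≤ (gEntryDeriv x - gEntryDeriv y) * ((M + 1) * M) := by
      gcongr
      · exact sub_nonneg.mpr (gEntryDeriv_strictAntiOn.antitoneOn hx hy hxy)
      · linarith
    _ = (M + 1) * M * (gEntryDeriv x - gEntryDeriv y) := by ring

lemma strictConcaveOn_gEntry : StrictConcaveOn ℝ (Ici 0) gEntry := by
  refine StrictAntiOn.strictConcaveOn_of_deriv (convex_Ici 0) continuous_gEntry.continuousOn ?_
  rw [interior_Ici]
  exact gEntryDeriv_strictAntiOn.congr fun x hx => ((hasDerivAt_gEntry hx).deriv).symm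

lemma StrictConcaveOn.lt_add_mul_sub_of_hasDerivAt {S : Set ℝ} {f : ℝ → ℝ} {f' w x : ℝ}
    (hf : StrictConcaveOn ℝ S f) (hw : w ∈ S) (hx : x ∈ S) (hxw : x ≠ w)
    (hd : HasDerivAt f f' w) : f x < f w + f' * (x - w) := by
  rcases hxw.lt_or_gt with h | h
  · have := hf.lt_slope_of_hasDerivAt hx hw h hd
    rw [slope_def_field, lt_div_iff₀ (by linarith)] at this
    linarith
  · have := hf.slope_lt_of_hasDerivAt hw hx h hd
    rw [slope_def_field, div_lt_iff₀ (by linarith)] at this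
    linarith

lemma gEntry_lt_tangent {w x : ℝ} (hw : 0 < w) (hx : 0 ≤ x) (hxw : x ≠ w) :
    gEntry x < gEntry w + gEntryDeriv w * (x - w) :=
  strictConcaveOn_gEntry.lt_add_mul_sub_of_hasDerivAt hw.le hx hxw (hasDerivAt_gEntry hw)

lemma gEntry_le_tangent {w x : ℝ} (hw : 0 < w) (hx : 0 ≤ x) :
    gEntry x ≤ gEntry w + gEntryDeriv w * (x - w) := by
  rcases eq_or_ne x w with rfl | hxw
  · simp
  · exact (gEntry_lt_tangent hw hx hxw).le

lemma sum_sum_add_mul_sub_eq_zero {m n : ℕ} {r : Fin m → ℝ} {c : Fin n → ℝ}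
    {X Y : Fin m → Fin n → ℝ} (hX : X ∈ transportPolytope r c) (hY : Y ∈ transportPolytope r c)
    (u : Fin m → ℝ) (v : Fin n → ℝ) :
    ∑ i, ∑ j, (u i + v j) * (X i j - Y i j) = 0 := by
  have hu : ∑ i, ∑ j, u i * (X i j - Y i j) = 0 := by
    simp [← mul_sum, sum_sub_distrib, hX.2.1, hY.2.1]
  have hv : ∑ i, ∑ j, v j * (X i j - Y i j) = 0 := by
    rw [sum_comm]
    simp [← mul_sum, sum_sub_distrib, hX.2.2, hY.2.2]
  simp only [add_mul, sum_add_distrib, hu, hv, add_zero]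

theorem eq_of_isMaxOn_gFun {m n : ℕ} {r : Fin m → ℝ} {c : Fin n → ℝ}
    {W Z : Fin m → Fin n → ℝ} (u : Fin m → ℝ) (v : Fin n → ℝ)
    (hW : W ∈ transportPolytope r c) (hWpos : ∀ i j, 0 < W i j)
    (hWdual : ∀ i j, gEntryDeriv (W i j) = u i + v j)
    (hZ : Z ∈ transportPolytope r c) (hmax : IsMaxOn gFun (transportPolytope r c) Z) :
    Z = W := by
  by_contra hne
  obtain ⟨i, j, hij⟩ : ∃ i j, Z i j ≠ W i j := by
    by_contra! h
    exact hne (funext fun i => funext (h i))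
  have htan : ∀ i j, gEntry (Z i j) ≤ gEntry (W i j) + (u i + v j) * (Z i j - W i j) :=
    fun i j => hWdual i j ▸ gEntry_le_tangent (hWpos i j) (hZ.1 i j)
  have hlt : gFun Z < gFun W := by
    rw [gFun_eq_sum_gEntry, gFun_eq_sum_gEntry]
    calc ∑ i, ∑ j, gEntry (Z i j)
        < ∑ i, ∑ j, (gEntry (W i j) + (u i + v j) * (Z i j - W i j)) :=
          sum_lt_sum (fun i _ => sum_le_sum fun j _ => htan i j)
            ⟨i, mem_univ _, sum_lt_sum (fun j _ => htan i j)
              ⟨j, mem_univ _, hWdual i j ▸ gEntry_lt_tangent (hWpos i j) (hZ.1 i j) hij⟩⟩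
      _ = ∑ i, ∑ j, gEntry (W i j) := by
          simp only [sum_add_distrib, sum_sum_add_mul_sub_eq_zero hZ hW, add_zero]
  exact (hmax hW).not_gt hlt

lemma sum_ite_val_lt (p n : ℕ) (x y : ℝ) :
    ∑ j : Fin (p + n), (if (j : ℕ) < p then x else y) = p * x + n * y := by
  simp [Fin.sum_univ_add, mul_comm]

def blockMatrix (p n : ℕ) (a b d : ℝ) : Fin (p + n) → Fin (p + n) → ℝ :=
  fun i j => if (i : ℕ) < p then (if (j : ℕ) < p then a else b) else (if (j : ℕ) < p then b else d)

lemma blockMatrix_comm (p n : ℕ) (a b d : ℝ) (i j : Fin (p + n)) :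
    blockMatrix p n a b d i j = blockMatrix p n a b d j i := by
  unfold blockMatrix
  split_ifs <;> rfl

lemma sum_blockMatrix (p n : ℕ) (a b d : ℝ) (i : Fin (p + n)) :
    ∑ j, blockMatrix p n a b d i j = if (i : ℕ) < p then p * a + n * b else p * b + n * d := by
  unfold blockMatrix
  split_ifs <;> exact sum_ite_val_lt p n _ _

lemma blockMatrix_mem_transportPolytope {p n R S : ℕ} {a b d : ℝ} (ha : 0 ≤ a) (hb : 0 ≤ b)
    (hd : 0 ≤ d) (hR : p * a + n * b = R) (hS : p * b + n * d = S) :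
    blockMatrix p n a b d ∈ transportPolytope (margin p n R S) (margin p n R S) := by
  have hrow : ∀ i, ∑ j, blockMatrix p n a b d i j = margin p n R S i := fun i => by
    rw [sum_blockMatrix, margin, hR, hS]
  refine ⟨fun i j => ?_, hrow, fun j => ?_⟩
  · unfold blockMatrix
    split_ifs <;> assumption
  · simp_rw [blockMatrix_comm p n a b d _ j]
    exact hrow j

lemma gEntryDeriv_blockMatrix {p n : ℕ} {a b d : ℝ}
    (hstat : gEntryDeriv a + gEntryDeriv d = 2 * gEntryDeriv b) (i j : Fin (p + n)) :
    gEntryDeriv (blockMatrix p n a b d i j) =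
      (if (i : ℕ) < p then gEntryDeriv a / 2 else gEntryDeriv d / 2) +
        (if (j : ℕ) < p then gEntryDeriv a / 2 else gEntryDeriv d / 2) := by
  unfold blockMatrix
  split_ifs <;> linarith

/-- `(a, b, d)` are the common entries of the three blocks of the typical table of
`M_{n,δ}(B,C)`, with all margins divided by `n`: `e = p / n`, `r = ⌊BCn⌋ / n`, `s = ⌊Cn⌋ / n`. -/
structure IsBlockSolution (e r s a b d : ℝ) : Prop where
  pos_a : 0 < a
  pos_b : 0 < b
  pos_d : 0 < d
  first_margin : e * a + b = r
  last_margin : e * b + d = s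
  stationary : gEntryDeriv a + gEntryDeriv d = 2 * gEntryDeriv b

theorem IsBlockSolution.eq_blockMatrix_of_isMaxOn {p n R S : ℕ} {a b d : ℝ}
    (hsol : IsBlockSolution ((p : ℝ) / n) ((R : ℝ) / n) ((S : ℝ) / n) a b d) (hn : 0 < n)
    {Z : Fin (p + n) → Fin (p + n) → ℝ}
    (hZ : Z ∈ transportPolytope (margin p n R S) (margin p n R S))
    (hmax : IsMaxOn gFun (transportPolytope (margin p n R S) (margin p n R S)) Z) :
    Z = blockMatrix p n a b d := by
  have hn' : (n : ℝ) ≠ 0 := by positivity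
  have hR : p * a + n * b = R := by
    have := hsol.first_margin
    field_simp at this
    linarith
  have hS : p * b + n * d = S := by
    have := hsol.last_margin
    field_simp at this
    linarith
  exact eq_of_isMaxOn_gFun _ _
    (blockMatrix_mem_transportPolytope hsol.pos_a.le hsol.pos_b.le hsol.pos_d.le hR hS)
    (fun i j => by unfold blockMatrix; split_ifs <;> simp only [hsol.pos_a, hsol.pos_b, hsol.pos_d])
    (gEntryDeriv_blockMatrix hsol.stationary) hZ hmax

theorem exists_isBlockSolution {e r s a₁ : ℝ} (he : 0 ≤ e) (ha₁ : 0 < a₁)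
    (hb : 0 < r - e * a₁) (hd : 0 < s - e * r)
    (hend : gEntryDeriv a₁ + gEntryDeriv (s - e * (r - e * a₁)) ≤ 2 * gEntryDeriv (r - e * a₁)) :
    ∃ a ∈ Ioc 0 a₁, IsBlockSolution e r s a (r - e * a) (s - e * (r - e * a)) := by
  set Φ : ℝ → ℝ := fun a =>
    gEntryDeriv a + gEntryDeriv (s - e * (r - e * a)) - 2 * gEntryDeriv (r - e * a)
  have hbpos : ∀ a ≤ a₁, 0 < r - e * a := fun a ha =>
    hb.trans_le (by nlinarith [mul_le_mul_of_nonneg_left ha he])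
  have hdpos : ∀ a, 0 ≤ a → 0 < s - e * (r - e * a) := fun a ha =>
    hd.trans_le (by nlinarith [mul_nonneg (mul_nonneg he he) ha])
  have hM : 0 < 2 * gEntryDeriv (r - e * a₁) := by linarith [gEntryDeriv_pos hb]
  -- `a₀` is chosen so small that `gEntryDeriv a₀` dominates the `b`-term of `Φ`.
  set a₀ := min a₁ (exp (2 * gEntryDeriv (r - e * a₁)) - 1)⁻¹
  have ha₀ : 0 < a₀ := lt_min ha₁ (inv_pos.mpr (by linarith [add_one_lt_exp hM.ne']))
  have hΦa₀ : 0 ≤ Φ a₀ := by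
    have h₁ : 2 * gEntryDeriv (r - e * a₁) ≤ gEntryDeriv a₀ := by
      rw [← gEntryDeriv_exp_sub_one_inv hM]
      exact gEntryDeriv_strictAntiOn.antitoneOn ha₀ (ha₀.trans_le (min_le_right _ _))
        (min_le_right _ _)
    have h₂ : gEntryDeriv (r - e * a₀) ≤ gEntryDeriv (r - e * a₁) :=
      gEntryDeriv_strictAntiOn.antitoneOn (hbpos a₁ le_rfl) (hbpos a₀ (min_le_left _ _))
        (by nlinarith [mul_le_mul_of_nonneg_left (min_le_left _ _ : a₀ ≤ a₁) he])
    linarith [gEntryDeriv_pos (hdpos a₀ ha₀.le)]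
  have hcont : ContinuousOn Φ (Icc a₀ a₁) :=
    ((continuousOn_gEntryDeriv.mono fun a ha => ha₀.trans_le ha.1).add
      (continuousOn_gEntryDeriv.comp (by fun_prop) fun a ha => hdpos a (ha₀.le.trans ha.1))).sub
      (continuousOn_const.mul
        (continuousOn_gEntryDeriv.comp (by fun_prop) fun a ha => hbpos a ha.2))
  obtain ⟨a, ha, hΦ⟩ := intermediate_value_Icc' (min_le_left _ _) hcont
    ⟨by simp only [Φ]; linarith, hΦa₀⟩
  exact ⟨a, ⟨ha₀.trans_le ha.1, ha.2⟩, ha₀.trans_le ha.1, hbpos a ha.2,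
    hdpos a (ha₀.le.trans ha.1), by ring, by ring, by simp only [Φ] at hΦ; linarith⟩

theorem exists_isBlockSolution_of_small {β C A a₁ e τ r s t : ℝ} (hβ : 0 < β) (hC : 0 < C)
    (hAeq : gEntryDeriv A + gEntryDeriv C = 2 * gEntryDeriv β)
    (ha₁ : 0 < a₁) (hγ : gEntryDeriv a₁ = gEntryDeriv A / 2) (he : 0 ≤ e)
    (hr : r ∈ Icc (β - τ) β) (hs : s ∈ Icc (C - τ) C)
    (ht₁ : e * a₁ + τ ≤ t) (ht₂ : e * β + τ ≤ t) (htβ : t ≤ β / 2) (htC : t ≤ C / 2)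
    (htγ : t / (C / 2) ^ 2 ≤ gEntryDeriv A / 2) :
    ∃ a b d, IsBlockSolution e r s a b d ∧ a ≤ a₁ ∧ |b - β| ≤ t ∧ |d - C| ≤ t := by
  have hb : ∀ a ∈ Icc 0 a₁, r - e * a ∈ Icc (β - t) β := fun a ha =>
    ⟨by nlinarith [hr.1, mul_le_mul_of_nonneg_left ha.2 he],
      by nlinarith [hr.2, mul_nonneg he ha.1]⟩
  have hd : ∀ a ∈ Icc 0 a₁, s - e * (r - e * a) ∈ Icc (C - t) C := fun a ha =>
    ⟨by nlinarith [hs.1, mul_le_mul_of_nonneg_left (hb a ha).2 he],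
      by nlinarith [hs.2, mul_nonneg he (by linarith [(hb a ha).1] : 0 ≤ r - e * a)]⟩
  have ht : 0 ≤ t := by nlinarith [hr.1, hr.2, mul_nonneg he ha₁.le]
  have ha₁mem : a₁ ∈ Icc 0 a₁ := ⟨ha₁.le, le_rfl⟩
  have hend : gEntryDeriv a₁ + gEntryDeriv (s - e * (r - e * a₁)) ≤
      2 * gEntryDeriv (r - e * a₁) := by
    have h₁ : gEntryDeriv β ≤ gEntryDeriv (r - e * a₁) :=
      gEntryDeriv_strictAntiOn.antitoneOn (show 0 < r - e * a₁ by linarith [(hb a₁ ha₁mem).1]) hβ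
        (hb a₁ ha₁mem).2
    have h₂ := abs_gEntryDeriv_sub_le (half_pos hC)
      (show C / 2 ≤ s - e * (r - e * a₁) by linarith [(hd a₁ ha₁mem).1]) (by linarith : C / 2 ≤ C)
    have h₃ : |s - e * (r - e * a₁) - C| ≤ t :=
      abs_sub_le_iff.mpr ⟨by linarith [(hd a₁ ha₁mem).2], by linarith [(hd a₁ ha₁mem).1]⟩
    have h₄ : |s - e * (r - e * a₁) - C| / (C / 2) ^ 2 ≤ t / (C / 2) ^ 2 := by gcongr
    linarith [le_abs_self (gEntryDeriv (s - e * (r - e * a₁)) - gEntryDeriv C)]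
  obtain ⟨a, ha, hsol⟩ := exists_isBlockSolution he ha₁ (by linarith [(hb a₁ ha₁mem).1])
    (by nlinarith [hs.1, hr.2, mul_le_mul_of_nonneg_left hr.2 he]) hend
  have ha' : a ∈ Icc 0 a₁ := ⟨ha.1.le, ha.2⟩
  exact ⟨a, _, _, hsol, ha.2,
    abs_sub_le_iff.mpr ⟨by linarith [(hb a ha').2], by linarith [(hb a ha').1]⟩,
    abs_sub_le_iff.mpr ⟨by linarith [(hd a ha').2], by linarith [(hd a ha').1]⟩⟩

lemma abs_sub_le_of_stationary {a b d A β C a₁ t : ℝ} (hβ : 0 < β) (hC : 0 < C) (ha : 0 < a)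
    (hA : 0 < A) (haa₁ : a ≤ a₁) (hAa₁ : A ≤ a₁)
    (hstat : gEntryDeriv a + gEntryDeriv d = 2 * gEntryDeriv b)
    (hAeq : gEntryDeriv A + gEntryDeriv C = 2 * gEntryDeriv β)
    (hb : |b - β| ≤ t) (hd : |d - C| ≤ t) (htβ : t ≤ β / 2) (htC : t ≤ C / 2) :
    |a - A| ≤ (a₁ + 1) * a₁ * (2 / (β / 2) ^ 2 + 1 / (C / 2) ^ 2) * t := by
  have hb' : β / 2 ≤ b := by linarith [neg_abs_le (b - β)]
  have hd' : C / 2 ≤ d := by linarith [neg_abs_le (d - C)]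
  have ha₁ : 0 < a₁ := ha.trans_le haa₁
  have hlipb : |gEntryDeriv b - gEntryDeriv β| ≤ t / (β / 2) ^ 2 :=
    (abs_gEntryDeriv_sub_le (half_pos hβ) hb' (by linarith : β / 2 ≤ β)).trans (by gcongr)
  have hlipd : |gEntryDeriv d - gEntryDeriv C| ≤ t / (C / 2) ^ 2 :=
    (abs_gEntryDeriv_sub_le (half_pos hC) hd' (by linarith : C / 2 ≤ C)).trans (by gcongr)
  calc |a - A| ≤ (a₁ + 1) * a₁ * |gEntryDeriv a - gEntryDeriv A| :=
        abs_sub_le_mul_abs_gEntryDeriv_sub ha hA haa₁ hAa₁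
    _ = (a₁ + 1) * a₁ *
          |2 * (gEntryDeriv b - gEntryDeriv β) - (gEntryDeriv d - gEntryDeriv C)| := by
        congr 2
        linarith
    _ ≤ (a₁ + 1) * a₁ *
          (2 * |gEntryDeriv b - gEntryDeriv β| + |gEntryDeriv d - gEntryDeriv C|) := by
        have h := abs_sub (2 * (gEntryDeriv b - gEntryDeriv β)) (gEntryDeriv d - gEntryDeriv C)
        rw [abs_mul, abs_two] at h
        exact mul_le_mul_of_nonneg_left h (by positivity)
    _ ≤ (a₁ + 1) * a₁ * (2 * (t / (β / 2) ^ 2) + t / (C / 2) ^ 2) := by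
        gcongr
    _ = (a₁ + 1) * a₁ * (2 / (β / 2) ^ 2 + 1 / (C / 2) ^ 2) * t := by ring

theorem exists_isBlockSolution_near {β C A : ℝ} (hβ : 0 < β) (hC : 0 < C) (hA : 0 < A)
    (hAeq : gEntryDeriv A + gEntryDeriv C = 2 * gEntryDeriv β) :
    ∃ K ε₀ : ℝ, 0 < K ∧ 0 < ε₀ ∧ ∀ e τ r s : ℝ, 0 ≤ e → 0 ≤ τ → e + τ ≤ ε₀ →
      r ∈ Icc (β - τ) β → s ∈ Icc (C - τ) C →
      ∃ a b d, IsBlockSolution e r s a b d ∧ |a - A| ≤ K * (e + τ) ∧ |b - β| ≤ K * (e + τ) := by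
  have hγ := gEntryDeriv_pos hA
  set a₁ := (exp (gEntryDeriv A / 2) - 1)⁻¹
  have ha₁ : gEntryDeriv a₁ = gEntryDeriv A / 2 := gEntryDeriv_exp_sub_one_inv (by linarith)
  have ha₁pos : 0 < a₁ := inv_pos.mpr (by linarith [add_one_lt_exp (half_pos hγ).ne'])
  have hAa₁ : A ≤ a₁ := (gEntryDeriv_strictAntiOn.le_iff_ge ha₁pos hA).mp (by linarith)
  set L := a₁ + β + 1
  set K₁ := (a₁ + 1) * a₁ * (2 / (β / 2) ^ 2 + 1 / (C / 2) ^ 2)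
  have hL : 0 < L := by positivity
  have hK₁ : 0 < K₁ := by positivity
  refine ⟨L * (K₁ + 1), min (β / 2) (min (C / 2) (gEntryDeriv A / 2 * (C / 2) ^ 2)) / L,
    by positivity, by positivity, fun e τ r s he hτ hε hr hs => ?_⟩
  have ht : L * (e + τ) ≤ min (β / 2) (min (C / 2) (gEntryDeriv A / 2 * (C / 2) ^ 2)) := by
    rwa [le_div_iff₀ hL, mul_comm] at hε
  obtain ⟨a, b, d, hsol, haa₁, hb, hd⟩ := exists_isBlockSolution_of_small hβ hC hAeq ha₁pos ha₁
    he hr hs (t := L * (e + τ)) (by nlinarith) (by nlinarith)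
    (ht.trans (min_le_left _ _)) (ht.trans ((min_le_right _ _).trans (min_le_left _ _)))
    ((div_le_iff₀ (by positivity)).mpr (ht.trans ((min_le_right _ _).trans (min_le_right _ _))))
  have hLt : 0 ≤ L * (e + τ) := by positivity
  refine ⟨a, b, d, hsol, ?_, hb.trans (by nlinarith [mul_nonneg hK₁.le hLt])⟩
  calc |a - A| ≤ K₁ * (L * (e + τ)) :=
        abs_sub_le_of_stationary hβ hC hsol.pos_a hA haa₁ hAa₁ hsol.stationary hAeq hb hd
          (ht.trans (min_le_left _ _)) (ht.trans ((min_le_right _ _).trans (min_le_left _ _)))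
    _ ≤ L * (K₁ + 1) * (e + τ) := by nlinarith [mul_nonneg hK₁.le hLt]

lemma subcriticalLimit_spec {B C Bc : ℝ} (hB : 0 < B) (hC : 0 < C)
    (hBc : Bc = 1 + √(1 + 1 / C)) (hBlt : B < Bc) :
    0 < B ^ 2 * (C + 1) / ((Bc - B) * (Bc + B - 2)) ∧
      gEntryDeriv (B ^ 2 * (C + 1) / ((Bc - B) * (Bc + B - 2))) + gEntryDeriv C =
        2 * gEntryDeriv (B * C) := by
  have hsq : √(1 + 1 / C) ^ 2 = 1 + 1 / C := sq_sqrt (by positivity)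
  have hs1 : 1 < √(1 + 1 / C) := by
    rw [lt_sqrt zero_le_one]
    linarith [one_div_pos.mpr hC]
  have hD : 0 < (Bc - B) * (Bc + B - 2) := mul_pos (by linarith) (by linarith)
  have hCD : C * ((Bc - B) * (Bc + B - 2)) = 2 * B * C - B ^ 2 * C + 1 := by
    rw [show (Bc - B) * (Bc + B - 2) = √(1 + 1 / C) ^ 2 - (B - 1) ^ 2 by rw [hBc]; ring, hsq]
    field_simp
    ring
  generalize (Bc - B) * (Bc + B - 2) = D at hD hCD ⊢
  have hA : 0 < B ^ 2 * (C + 1) / D := by positivity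
  refine ⟨hA, ?_⟩
  have key : (B ^ 2 * (C + 1) / D + 1) / (B ^ 2 * (C + 1) / D) * ((C + 1) / C) =
      ((B * C + 1) / (B * C)) ^ 2 := by
    field_simp
    linear_combination hCD
  rw [gEntryDeriv_eq_log_div hA, gEntryDeriv_eq_log_div hC, gEntryDeriv_eq_log_div (by positivity),
    ← log_mul (by positivity) (by positivity), key, log_pow]
  norm_num

lemma natFloor_rpow_pos {n : ℕ} {δ : ℝ} (hn : 1 ≤ n) (hδ : 0 ≤ δ) : 0 < ⌊(n : ℝ) ^ δ⌋₊ :=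
  Nat.le_floor (by simpa using one_le_rpow (by exact_mod_cast hn : (1 : ℝ) ≤ n) hδ)

lemma natFloor_rpow_div_add_one_div_le {n : ℕ} {δ : ℝ} (hn : 1 ≤ n) (hδ : 0 ≤ δ) :
    (⌊(n : ℝ) ^ δ⌋₊ : ℝ) / n + 1 / n ≤ 2 * (n : ℝ) ^ (δ - 1) := by
  have hn1 : (1 : ℝ) ≤ n := by exact_mod_cast hn
  rw [rpow_sub (by linarith), rpow_one, ← add_div, mul_div_assoc']
  gcongr
  linarith [Nat.floor_le (rpow_nonneg (by linarith : (0 : ℝ) ≤ n) δ), one_le_rpow hn1 hδ]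

lemma natFloor_mul_div_mem_Icc {x : ℝ} {n : ℕ} (hx : 0 ≤ x) (hn : (0 : ℝ) < n) :
    (⌊x * n⌋₊ : ℝ) / n ∈ Icc (x - 1 / n) x := by
  constructor
  · rw [le_div_iff₀ hn, sub_mul, one_div_mul_cancel hn.ne']
    exact (Nat.sub_one_lt_floor _).le
  · rw [div_le_iff₀ hn]
    exact Nat.floor_le (by positivity)

lemma tendsto_natCast_rpow_sub_one {δ : ℝ} (hδ : δ < 1) :
    Tendsto (fun n : ℕ => (n : ℝ) ^ (δ - 1)) atTop (𝓝 0) := by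
  have := (tendsto_rpow_neg_atTop (by linarith : 0 < 1 - δ)).comp tendsto_natCast_atTop_atTop
  simpa [Function.comp_def] using this

/-- Subcritical regime `B < B_c = 1 + √(1 + 1/C)`: the entries `z_{11}` and `z_{1,p+1}` of
the typical table of `M_{n,δ}(B,C)` converge to `B²(C+1)/((B_c−B)(B_c+B−2))` and `BC`
respectively, with error `O(n^{δ−1})`. -/
theorem typicalTable_subcritical_asymptotics
    (B C δ : ℝ) (hB : 0 < B) (hC : 0 < C) (hδ0 : 0 ≤ δ) (hδ1 : δ < 1)
    (Bc : ℝ) (hBc : Bc = 1 + Real.sqrt (1 + 1 / C)) (hBlt : B < Bc) :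
    ∃ K : ℝ, 0 < K ∧ ∃ N : ℕ, ∀ n : ℕ, ∀ hn : 1 ≤ n, N ≤ n →
      ∀ Z : Fin (⌊(n : ℝ) ^ δ⌋₊ + n) → Fin (⌊(n : ℝ) ^ δ⌋₊ + n) → ℝ,
        Z ∈ transportPolytope
            (margin ⌊(n : ℝ) ^ δ⌋₊ n ⌊B * C * n⌋₊ ⌊C * n⌋₊)
            (margin ⌊(n : ℝ) ^ δ⌋₊ n ⌊B * C * n⌋₊ ⌊C * n⌋₊) →
        IsMaxOn gFun
          (transportPolytope
            (margin ⌊(n : ℝ) ^ δ⌋₊ n ⌊B * C * n⌋₊ ⌊C * n⌋₊)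
            (margin ⌊(n : ℝ) ^ δ⌋₊ n ⌊B * C * n⌋₊ ⌊C * n⌋₊)) Z →
        |Z ⟨0, by omega⟩ ⟨0, by omega⟩
            - B ^ 2 * (C + 1) / ((Bc - B) * (Bc + B - 2))| ≤ K * (n : ℝ) ^ (δ - 1) ∧
        |Z ⟨0, by omega⟩ ⟨⌊(n : ℝ) ^ δ⌋₊, by omega⟩ - B * C| ≤ K * (n : ℝ) ^ (δ - 1) := by
  obtain ⟨hA, hAeq⟩ := subcriticalLimit_spec hB hC hBc hBlt
  obtain ⟨K, ε₀, hK, hε₀, hnear⟩ := exists_isBlockSolution_near (mul_pos hB hC) hC hA hAeq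
  obtain ⟨N, hN⟩ := eventually_atTop.mp
    ((tendsto_natCast_rpow_sub_one hδ1).eventually (eventually_le_nhds (half_pos hε₀)))
  refine ⟨2 * K, by positivity, N, fun n hn hNn Z hZ hmax => ?_⟩
  have hn0 : (0 : ℝ) < n := by exact_mod_cast hn
  have herr := natFloor_rpow_div_add_one_div_le hn hδ0
  obtain ⟨a, b, d, hsol, ha, hb⟩ := hnear (⌊(n : ℝ) ^ δ⌋₊ / n) (1 / n) _ _ (by positivity)
    (by positivity) (by linarith [hN n hNn]) (natFloor_mul_div_mem_Icc (by positivity) hn0)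
    (natFloor_mul_div_mem_Icc hC.le hn0)
  have hK : K * (⌊(n : ℝ) ^ δ⌋₊ / n + 1 / n) ≤ 2 * K * (n : ℝ) ^ (δ - 1) := by nlinarith
  rw [hsol.eq_blockMatrix_of_isMaxOn hn hZ hmax]
  simp only [blockMatrix, natFloor_rpow_pos hn hδ0, lt_self_iff_false, if_true, if_false]
  exact ⟨ha.trans hK, hb.trans hK⟩
end

section
/- Let m, n ≥ 1 and let Z = (z_{jk}) be an m×n matrix with z_{jk} > 0 for all j, k. Define the quadratic form q on ℝ^{m+n} by q(s,t) = (1/2) Σ_{1≤j≤m, 1≤k≤n} (z_{jk}² + z_{jk})(s_j + t_k)². Then q(s,t) ≥ 0 for all (s,t), and q(s,t) = 0 if and only if (s,t) is a scalar multiple of the vector u = (1,…,1,−1,…,−1) (m ones followed by n minus-ones); i.e., the null space of q is spanned by u. -/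
/-- The quadratic form `q(s,t) = (1/2) ∑_{j,k} (z_{jk}² + z_{jk})(s_j + t_k)²`
associated to an `m × n` matrix `Z = (z_{jk})`. -/
noncomputable def qform {m n : ℕ} (z : Fin m → Fin n → ℝ)
    (s : Fin m → ℝ) (t : Fin n → ℝ) : ℝ :=
  (1 / 2) * ∑ j, ∑ k, (z j k ^ 2 + z j k) * (s j + t k) ^ 2

/-- For a positive matrix `Z`, the quadratic form `q` is nonnegative, and `q(s,t) = 0`
iff `(s,t)` is a scalar multiple of `u = (1,…,1,−1,…,−1)`; i.e. the null space of `q`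
is spanned by `u`. -/
theorem qform_nonneg_and_nullspace (m n : ℕ) (hm : 1 ≤ m) (hn : 1 ≤ n)
    (z : Fin m → Fin n → ℝ) (hz : ∀ j k, 0 < z j k) :
    (∀ (s : Fin m → ℝ) (t : Fin n → ℝ), 0 ≤ qform z s t) ∧
    (∀ (s : Fin m → ℝ) (t : Fin n → ℝ),
      qform z s t = 0 ↔ ∃ α : ℝ, (∀ j, s j = α) ∧ (∀ k, t k = -α)) := by
  have hterm : ∀ (s : Fin m → ℝ) (t : Fin n → ℝ) j k,
      0 ≤ (z j k ^ 2 + z j k) * (s j + t k) ^ 2 := by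
    intro s t j k
    have := hz j k
    positivity
  have hnn : ∀ (s : Fin m → ℝ) (t : Fin n → ℝ), 0 ≤ qform z s t := by
    intro s t
    unfold qform
    have : 0 ≤ ∑ j, ∑ k, (z j k ^ 2 + z j k) * (s j + t k) ^ 2 :=
      Finset.sum_nonneg fun j _ => Finset.sum_nonneg fun k _ => hterm s t j k
    linarith
  refine ⟨hnn, fun s t => ⟨fun h => ?_, fun ⟨α, hs, ht⟩ => ?_⟩⟩
  · have hsum : ∑ j, ∑ k, (z j k ^ 2 + z j k) * (s j + t k) ^ 2 = 0 := by
      unfold qform at h; linarith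
    have hall : ∀ j ∈ Finset.univ, ∀ k ∈ Finset.univ,
        (z j k ^ 2 + z j k) * (s j + t k) ^ 2 = 0 := by
      intro j _
      have h1 := (Finset.sum_eq_zero_iff_of_nonneg (fun j _ =>
        Finset.sum_nonneg fun k _ => hterm s t j k)).mp hsum j (Finset.mem_univ j)
      exact fun k _ => (Finset.sum_eq_zero_iff_of_nonneg
        (fun k _ => hterm s t j k)).mp h1 k (Finset.mem_univ k)
    have hst : ∀ j k, s j + t k = 0 := by
      intro j k
      have h0 := hall j (Finset.mem_univ j) k (Finset.mem_univ k)
      have hzpos : 0 < z j k ^ 2 + z j k := by have := hz j k; positivity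
      have : (s j + t k) ^ 2 = 0 := by
        rcases mul_eq_zero.mp h0 with h' | h'
        · exact absurd h' hzpos.ne'
        · exact h'
      have := pow_eq_zero_iff (n := 2) (by norm_num) |>.mp this
      linarith
    refine ⟨s ⟨0, hm⟩, fun j => ?_, fun k => ?_⟩
    · have h1 := hst j ⟨0, hn⟩
      have h2 := hst ⟨0, hm⟩ ⟨0, hn⟩
      linarith
    · have := hst ⟨0, hm⟩ k
      linarith
  · unfold qform
    have : ∀ j k, s j + t k = 0 := fun j k => by rw [hs j, ht k]; ring
    simp only [this]
    simp
end

section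
/- Let m, n ≥ 1 and let Z = (z_{jk}) be an m×n matrix with z_{jk} > 0 for all j, k, and let q be the associated quadratic form on ℝ^{m+n}. Let H = u^⊥ be the orthogonal complement of u = (1,…,1,−1,…,−1). Then the restriction of q to H is positive definite: q(s,t) > 0 for every nonzero (s,t) ∈ H. -/
/-- For a positive matrix `Z`, the restriction of `q` to `H = u^⊥` (where
`u = (1,…,1,−1,…,−1)`, so `(s,t) ∈ H` iff `∑ s_j = ∑ t_k`) is positive definite:
`q(s,t) > 0` for every nonzero `(s,t) ∈ H`. -/
theorem qform_posDef_on_H (m n : ℕ) (hm : 1 ≤ m) (hn : 1 ≤ n)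
    (z : Fin m → Fin n → ℝ) (hz : ∀ j k, 0 < z j k) :
    ∀ (s : Fin m → ℝ) (t : Fin n → ℝ),
      (∑ j, s j) = (∑ k, t k) → ¬(s = 0 ∧ t = 0) → 0 < qform z s t := by
  intro s t hsum hne
  unfold qform
  by_cases h : ∀ j k, s j + t k = 0
  · exfalso
    set j0 : Fin m := ⟨0, hm⟩
    set k0 : Fin n := ⟨0, hn⟩
    have hs : ∀ j, s j = s j0 := fun j => by
      have h1 := h j k0; have h2 := h j0 k0; linarith
    have ht : ∀ k, t k = t k0 := fun k => by
      have h1 := h j0 k; have h2 := h j0 k0; linarith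
    have h1 : (∑ j, s j) = m * s j0 := by
      rw [Finset.sum_congr rfl fun j _ => hs j]
      simp [Finset.sum_const, mul_comm]
    have h2 : (∑ k, t k) = n * t k0 := by
      rw [Finset.sum_congr rfl fun k _ => ht k]
      simp [Finset.sum_const, mul_comm]
    have h3 := h j0 k0
    have hm' : (1 : ℝ) ≤ m := by exact_mod_cast hm
    have hn' : (1 : ℝ) ≤ n := by exact_mod_cast hn
    have hs0 : s j0 = 0 := by
      rw [h1, h2] at hsum
      nlinarith
    have ht0 : t k0 = 0 := by linarith
    exact hne ⟨funext fun j => by rw [hs j, hs0]; rfl,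
      funext fun k => by rw [ht k, ht0]; rfl⟩
  · push_neg at h
    obtain ⟨j, k, hjk⟩ := h
    have hpos : 0 < ∑ j, ∑ k, (z j k ^ 2 + z j k) * (s j + t k) ^ 2 := by
      apply Finset.sum_pos'
      · intro j' _
        apply Finset.sum_nonneg
        intro k' _
        have := hz j' k'
        positivity
      · refine ⟨j, Finset.mem_univ j, ?_⟩
        apply Finset.sum_pos'
        · intro k' _
          have := hz j k'
          positivity
        · refine ⟨k, Finset.mem_univ k, ?_⟩
          have hz' := hz j k
          have h2 : 0 < (s j + t k) ^ 2 := pow_two_pos_of_ne_zero hjk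
          nlinarith
    linarith
end

section
/- Let p, n ≥ 1, let a, b, c be real numbers, and let Z be the (p+n)×(p+n) matrix with z_{ij} = a for i,j ≤ p, z_{ij} = c for i,j > p, and z_{ij} = b otherwise. Let Q be the (2(p+n)−1)×(2(p+n)−1) symmetric matrix associated to Z and write Q = A + E where A is the diagonal part of Q and E the off-diagonal part. Then: (i) E has rank at most 4; (ii) every principal minor of E of odd order vanishes; (iii) every principal minor of E of order at least 5 vanishes. In particular, with S_k as in the diagonal expansion of det(A+E), one has det E = 0, S_{2(p+n)−2} = 0, S_{2(p+n)−4} = 0, and S_{2(p+n)−i} = 0 for all i ≥ 6. -/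
/-- The `(m+n−1) × (m+n−1)` symmetric matrix `Q` associated to an `m × n` matrix `Z`. -/
noncomputable def Qmat {m n : ℕ} (z : Fin m → Fin n → ℝ) :
    Matrix (Fin (m + n - 1)) (Fin (m + n - 1)) ℝ :=
  Matrix.of fun i j =>
    if hi : (i : ℕ) < m then
      if hj : (j : ℕ) < m then
        if i = j then ∑ k : Fin n, (z ⟨i, hi⟩ k + z ⟨i, hi⟩ k ^ 2) else 0
      else
        z ⟨i, hi⟩ ⟨(j : ℕ) - m, by have := j.isLt; omega⟩ ^ 2
          + z ⟨i, hi⟩ ⟨(j : ℕ) - m, by have := j.isLt; omega⟩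
    else
      if hj : (j : ℕ) < m then
        z ⟨j, hj⟩ ⟨(i : ℕ) - m, by have := i.isLt; omega⟩ ^ 2
          + z ⟨j, hj⟩ ⟨(i : ℕ) - m, by have := i.isLt; omega⟩
      else
        if i = j then
          ∑ l : Fin m, (z l ⟨(i : ℕ) - m, by have := i.isLt; omega⟩
            + z l ⟨(i : ℕ) - m, by have := i.isLt; omega⟩ ^ 2)
        else 0

/-- The principal minor of `E` on the index set `T`. -/
noncomputable def principalMinor {N : ℕ} (E : Matrix (Fin N) (Fin N) ℝ)
    (T : Finset (Fin N)) : ℝ :=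
  (E.submatrix (T.orderEmbOfFin rfl) (T.orderEmbOfFin rfl)).det

/-- The term `S_k` of the diagonal expansion of `det(A + E)` with `A = diag(a)`. -/
noncomputable def Sterm {N : ℕ} (a : Fin N → ℝ) (E : Matrix (Fin N) (Fin N) ℝ)
    (k : ℕ) : ℝ :=
  ∑ S ∈ Finset.powersetCard k (Finset.univ : Finset (Fin N)),
    (∏ i ∈ S, a i) * principalMinor E Sᶜ

/-- The `(p+n) × (p+n)` block matrix with value `a` on the top-left `p × p` block, `c` on
the bottom-right `n × n` block, and `b` on the two off-diagonal blocks. -/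
def blockZ (p n : ℕ) (a b c : ℝ) : Fin (p + n) → Fin (p + n) → ℝ :=
  fun i j =>
    if (i : ℕ) < p then (if (j : ℕ) < p then a else b)
    else (if (j : ℕ) < p then b else c)

/-- Sign-conjugation lemma: if `D M D = -M` with `D` a `±1` diagonal and odd size, `det M = 0`. -/
lemma det_zero_of_sign {r : ℕ} (hr : Odd r) (M : Matrix (Fin r) (Fin r) ℝ) (d : Fin r → ℝ)
    (hd : ∀ i, d i = 1 ∨ d i = -1) (h : ∀ i j, d i * M i j * d j = -M i j) : M.det = 0 := by
  have hdm : Matrix.diagonal d * M * Matrix.diagonal d = -M := by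
    ext i j
    rw [Matrix.mul_diagonal, Matrix.diagonal_mul, Matrix.neg_apply]
    exact h i j
  have hprod : (∏ i, d i) * (∏ i, d i) = 1 := by
    rw [← Finset.prod_mul_distrib]
    exact Finset.prod_eq_one fun i _ => by rcases hd i with h' | h' <;> rw [h'] <;> norm_num
  have h1 : (Matrix.diagonal d * M * Matrix.diagonal d).det = M.det := by
    rw [Matrix.det_mul, Matrix.det_mul, Matrix.det_diagonal]
    calc (∏ i, d i) * M.det * (∏ i, d i) = ((∏ i, d i) * (∏ i, d i)) * M.det := by ring
    _ = M.det := by rw [hprod, one_mul]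
  rw [hdm, Matrix.det_neg, Fintype.card_fin, hr.neg_one_pow] at h1
  linarith

lemma rank_le_four' {r : ℕ} (M : Matrix (Fin r) (Fin r) ℝ) (u1 u2 w1 w2 : Fin r → ℝ)
    (hM : ∀ i j, M i j = u1 i * w1 j + u2 i * w2 j + w1 i * u1 j + w2 i * u2 j) :
    M.rank ≤ 4 := by
  have hUW : M = (Matrix.of fun i (t : Fin 4) => ![u1, u2, w1, w2] t i) *
      (Matrix.of fun (t : Fin 4) j => ![w1, w2, u1, u2] t j) := by
    ext i j
    simp [Matrix.mul_apply, Fin.sum_univ_four, hM i j]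
  rw [hUW]
  calc ((Matrix.of fun i (t : Fin 4) => ![u1, u2, w1, w2] t i) *
      (Matrix.of fun (t : Fin 4) j => ![w1, w2, u1, u2] t j)).rank
      ≤ (Matrix.of fun i (t : Fin 4) => ![u1, u2, w1, w2] t i).rank :=
        Matrix.rank_mul_le_left _ _
    _ ≤ Fintype.card (Fin 4) := Matrix.rank_le_card_width _
    _ = 4 := by simp

lemma det_zero_of_rank_lt {r : ℕ} (M : Matrix (Fin r) (Fin r) ℝ) (h : M.rank < r) :
    M.det = 0 := by
  by_contra hd
  have := Matrix.rank_of_isUnit M ((Matrix.isUnit_iff_isUnit_det M).mpr (isUnit_iff_ne_zero.mpr hd))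
  rw [Fintype.card_fin] at this
  omega

def uu1 (p n : ℕ) : Fin ((p + n) + (p + n) - 1) → ℝ :=
  fun i => if (i : ℕ) < p then 1 else 0

def uu2 (p n : ℕ) : Fin ((p + n) + (p + n) - 1) → ℝ :=
  fun i => if (i : ℕ) < p + n ∧ p ≤ (i : ℕ) then 1 else 0

noncomputable def ww1 (p n : ℕ) (a b : ℝ) : Fin ((p + n) + (p + n) - 1) → ℝ :=
  fun j => if p + n ≤ (j : ℕ) then
    (if (j : ℕ) - (p + n) < p then a ^ 2 + a else b ^ 2 + b) else 0

noncomputable def ww2 (p n : ℕ) (b c : ℝ) : Fin ((p + n) + (p + n) - 1) → ℝ :=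
  fun j => if p + n ≤ (j : ℕ) then
    (if (j : ℕ) - (p + n) < p then b ^ 2 + b else c ^ 2 + c) else 0

lemma Eij (p n : ℕ) (a b c : ℝ) (i j : Fin ((p + n) + (p + n) - 1)) :
    (Qmat (blockZ p n a b c) - Matrix.diagonal (fun i => Qmat (blockZ p n a b c) i i)) i j
      = uu1 p n i * ww1 p n a b j + uu2 p n i * ww2 p n b c j
        + ww1 p n a b i * uu1 p n j + ww2 p n b c i * uu2 p n j := by
  rw [Matrix.sub_apply, Matrix.diagonal_apply]
  by_cases hi : (i : ℕ) < p + n <;> by_cases hj : (j : ℕ) < p + n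
  · simp only [Qmat, Matrix.of_apply, dif_pos hi, dif_pos hj, uu1, uu2, ww1, ww2,
      Nat.not_le.mpr hi, Nat.not_le.mpr hj, if_false]
    split_ifs with h <;> simp [h]
  · have hne : i ≠ j := fun h => hj (h ▸ hi)
    simp only [Qmat, Matrix.of_apply, dif_pos hi, dif_neg hj, if_neg hne, blockZ,
      uu1, uu2, ww1, ww2, Nat.le_of_not_lt hj, if_true, Nat.not_le.mpr hi, if_false, sub_zero]
    by_cases hip : (i : ℕ) < p <;> by_cases hjp : (j : ℕ) - (p + n) < p <;>
      simp [hip, hjp, Nat.le_of_not_lt, hi]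
  · have hne : i ≠ j := fun h => hi (h ▸ hj)
    simp only [Qmat, Matrix.of_apply, dif_neg hi, dif_pos hj, if_neg hne, blockZ,
      uu1, uu2, ww1, ww2, Nat.le_of_not_lt hi, if_true, Nat.not_le.mpr hj, if_false, sub_zero]
    by_cases hjp : (j : ℕ) < p <;> by_cases hip : (i : ℕ) - (p + n) < p <;>
      simp [hip, hjp, Nat.le_of_not_lt, hj]
  · simp only [Qmat, Matrix.of_apply, dif_neg hi, dif_neg hj, uu1, uu2, ww1, ww2]
    have hip : ¬ (i : ℕ) < p := by omega
    have hjp : ¬ (j : ℕ) < p := by omega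
    simp only [hip, hjp, hi, hj, if_false, false_and]
    split_ifs with h <;> simp [h]
/-- For the block matrix `Z` of `M_{n,δ}(B,C)`-type margins, the off-diagonal part `E` of
the associated matrix `Q` has rank at most `4`, all of its odd-order principal minors
vanish, and all of its principal minors of order at least `5` vanish; in particular
`det E = 0`, `S_{2(p+n)−2} = 0`, `S_{2(p+n)−4} = 0` and `S_{2(p+n)−i} = 0` for `i ≥ 6`. -/
theorem offDiagonal_part_minors_vanish (p n : ℕ) (hp : 1 ≤ p) (hn : 1 ≤ n)
    (a b c : ℝ)
    (Q : Matrix (Fin ((p + n) + (p + n) - 1)) (Fin ((p + n) + (p + n) - 1)) ℝ)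
    (hQ : Q = Qmat (blockZ p n a b c))
    (E : Matrix (Fin ((p + n) + (p + n) - 1)) (Fin ((p + n) + (p + n) - 1)) ℝ)
    (hE : E = Q - Matrix.diagonal (fun i => Q i i)) :
    E.rank ≤ 4 ∧
    (∀ T : Finset (Fin ((p + n) + (p + n) - 1)), Odd T.card → principalMinor E T = 0) ∧
    (∀ T : Finset (Fin ((p + n) + (p + n) - 1)), 5 ≤ T.card → principalMinor E T = 0) ∧
    E.det = 0 ∧
    Sterm (fun i => Q i i) E (2 * (p + n) - 2) = 0 ∧
    Sterm (fun i => Q i i) E (2 * (p + n) - 4) = 0 ∧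
    (∀ i : ℕ, 6 ≤ i → Sterm (fun i => Q i i) E (2 * (p + n) - i) = 0) := by
  have hEij : ∀ i j, E i j = uu1 p n i * ww1 p n a b j + uu2 p n i * ww2 p n b c j
      + ww1 p n a b i * uu1 p n j + ww2 p n b c i * uu2 p n j := by
    intro i j
    rw [hE, hQ]
    exact Eij p n a b c i j
  set d : Fin ((p + n) + (p + n) - 1) → ℝ :=
    fun i => if (i : ℕ) < p + n then 1 else -1 with hd
  have hdpm : ∀ i, d i = 1 ∨ d i = -1 := by
    intro i; by_cases h : (i : ℕ) < p + n <;> simp [hd, h]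
  have hsign : ∀ i j, d i * E i j * d j = -E i j := by
    intro i j
    by_cases hi : (i : ℕ) < p + n <;> by_cases hj : (j : ℕ) < p + n
    · have hz : E i j = 0 := by
        rw [hEij]
        simp [ww1, ww2, Nat.not_le.mpr hi, Nat.not_le.mpr hj]
      simp [hd, hi, hj, hz]
    · simp only [hd, hi, hj, if_true, if_false]; ring
    · simp only [hd, hi, hj, if_true, if_false]; ring
    · have hz : E i j = 0 := by
        rw [hEij]
        simp [uu1, uu2, hi, hj, show ¬ (i : ℕ) < p by omega, show ¬ (j : ℕ) < p by omega]
      simp [hd, hi, hj, hz]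
  have hOdd : ∀ T : Finset (Fin ((p + n) + (p + n) - 1)), Odd T.card →
      principalMinor E T = 0 := by
    intro T hT
    exact det_zero_of_sign hT _ (fun i => d (T.orderEmbOfFin rfl i))
      (fun i => hdpm _) (fun i j => hsign _ _)
  have h5 : ∀ T : Finset (Fin ((p + n) + (p + n) - 1)), 5 ≤ T.card →
      principalMinor E T = 0 := by
    intro T hT
    apply det_zero_of_rank_lt
    have := rank_le_four' (E.submatrix (T.orderEmbOfFin rfl) (T.orderEmbOfFin rfl))
      (fun i => uu1 p n (T.orderEmbOfFin rfl i)) (fun i => uu2 p n (T.orderEmbOfFin rfl i))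
      (fun i => ww1 p n a b (T.orderEmbOfFin rfl i)) (fun i => ww2 p n b c (T.orderEmbOfFin rfl i))
      (fun i j => hEij _ _)
    omega
  have hcard : ∀ (k : ℕ) (S : Finset (Fin ((p + n) + (p + n) - 1))),
      S ∈ Finset.powersetCard k (Finset.univ : Finset (Fin ((p + n) + (p + n) - 1))) →
      Sᶜ.card = (p + n) + (p + n) - 1 - k := by
    intro k S hS
    rw [Finset.card_compl, (Finset.mem_powersetCard.mp hS).2, Fintype.card_fin]
  refine ⟨rank_le_four' E _ _ _ _ hEij, hOdd, h5, ?_, ?_, ?_, ?_⟩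
  · exact det_zero_of_sign ⟨p + n - 1, by omega⟩ E d hdpm hsign
  · refine Finset.sum_eq_zero fun S hS => ?_
    rw [hOdd Sᶜ (by rw [hcard _ S hS]; exact ⟨0, by omega⟩), mul_zero]
  · refine Finset.sum_eq_zero fun S hS => ?_
    rw [hOdd Sᶜ (by rw [hcard _ S hS]; exact ⟨1, by omega⟩), mul_zero]
  · intro i hi
    refine Finset.sum_eq_zero fun S hS => ?_
    rcases le_or_gt i (2 * (p + n)) with h | h
    · rw [h5 Sᶜ (by rw [hcard _ S hS]; omega), mul_zero]
    · rw [hOdd Sᶜ (by rw [hcard _ S hS]; exact ⟨p + n - 1, by omega⟩), mul_zero]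
end

section
/- Let p, n ≥ 1, let a, b, c be real numbers, and let Z be the (p+n)×(p+n) matrix with z_{ij} = a for i,j ≤ p, z_{ij} = c for i,j > p, and z_{ij} = b otherwise. Let Q be the (2(p+n)−1)×(2(p+n)−1) symmetric matrix associated to Z, with diagonal part A and off-diagonal part E, and let S_k be the terms of the diagonal expansion of det(A+E). Then det Q = det A + S_{2(p+n)−3} + S_{2(p+n)−5}; that is, the only contributions to det Q beyond the product of the diagonal entries come from 2×2 and 4×4 principal minors of E. -/
/-!
Write `Q = A + E` with `A` diagonal. Expanding `det (A + E)` row by row gives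
`det Q = ∑ₖ Sₖ`, where `Sₖ` pairs products of `k` diagonal entries with principal minors of
`E` of order `N - k`. Two structural facts about `E` kill all but three terms. First, `E` is
bipartite between the indices `< p + n` (rows of `Z`) and the others (columns of `Z`), so
conjugating by the diagonal sign matrix of this bipartition negates every principal submatrix,
and principal minors of odd order vanish. Second, a row of `E` only depends on the block of `Z`
its index points into, and there are four such blocks, so a principal minor of order at least
five has two equal rows. Only the minors of order `0`, `2`, `4` remain.
-/

open Matrix Finset

lemma principalMinor_eq_det_submatrix {N : ℕ} (E : Matrix (Fin N) (Fin N) ℝ)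
    (T : Finset (Fin N)) :
    principalMinor E T = (E.submatrix ((↑) : T → Fin N) (↑)).det := by
  rw [principalMinor, ← det_submatrix_equiv_self (T.orderIsoOfFin rfl).toEquiv]
  rfl

lemma det_diagonal_add_eq_sum_principalMinor {N : ℕ} (d : Fin N → ℝ)
    (E : Matrix (Fin N) (Fin N) ℝ) :
    (diagonal d + E).det = ∑ S : Finset (Fin N), (∏ i ∈ S, d i) * principalMinor E Sᶜ := by
  change detRowAlternating ((fun i => diagonal d i) + fun i => E i) = _
  rw [AlternatingMap.map_add_univ]
  refine sum_congr rfl fun S _ => ?_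
  set M : Fin N → Fin N → ℝ := Sᶜ.piecewise E.row (1 : Matrix _ _ ℝ).row
  have hM : S.piecewise (fun i => diagonal d i) (fun i => E i) =
      S.piecewise (fun i => d i • M i) M := by
    ext i j
    by_cases hi : i ∈ S <;> simp [M, hi, Finset.piecewise, diagonal_apply, one_apply, row]
  rw [hM, ← AlternatingMap.coe_multilinearMap, MultilinearMap.map_piecewise_smul, smul_eq_mul,
    principalMinor_eq_det_submatrix, ← det_piecewise_one_eq_submatrix_det]
  rfl

lemma det_diagonal_add_eq_sum_Sterm {N : ℕ} (d : Fin N → ℝ) (E : Matrix (Fin N) (Fin N) ℝ) :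
    (diagonal d + E).det = ∑ k ∈ range (N + 1), Sterm d E k := by
  rw [det_diagonal_add_eq_sum_principalMinor, ← powerset_univ, sum_powerset, card_univ,
    Fintype.card_fin]
  rfl

lemma Sterm_self {N : ℕ} (d : Fin N → ℝ) (E : Matrix (Fin N) (Fin N) ℝ) :
    Sterm d E N = (diagonal d).det := by
  have hempty : principalMinor E ∅ = 1 := by
    rw [principalMinor_eq_det_submatrix]; exact det_isEmpty
  have huniv : powersetCard N (univ : Finset (Fin N)) = {univ} := by
    simpa using powersetCard_self (univ : Finset (Fin N))
  rw [Sterm, huniv, sum_singleton, compl_univ, hempty, mul_one, det_diagonal]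

lemma Sterm_eq_zero {N k : ℕ} (d : Fin N → ℝ) (E : Matrix (Fin N) (Fin N) ℝ)
    (h : ∀ T : Finset (Fin N), T.card = N - k → principalMinor E T = 0) :
    Sterm d E k = 0 :=
  sum_eq_zero fun S hS => by
    rw [h Sᶜ (by rw [card_compl, Fintype.card_fin, (mem_powersetCard.1 hS).2]), mul_zero]

namespace Matrix

theorem det_eq_zero_of_card_lt_of_row_eq {R ι α : Type*} [CommRing R] [Fintype ι]
    [DecidableEq ι] [Fintype α] (M : Matrix ι ι R) (cls : ι → α)
    (hM : ∀ i j, cls i = cls j → M i = M j) (hcard : Fintype.card α < Fintype.card ι) :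
    M.det = 0 :=
  let ⟨i, j, hij, hcls⟩ := Fintype.exists_ne_map_eq_of_card_lt cls hcard
  det_zero_of_row_eq hij (hM i j hcls)

theorem det_eq_zero_of_bipartite {R ι : Type*} [CommRing R] [NoZeroDivisors R] [CharZero R]
    [Fintype ι] [DecidableEq ι] (M : Matrix ι ι R) (s : ι → Prop) [DecidablePred s]
    (hM : ∀ i j, (s i ↔ s j) → M i j = 0) (hodd : Odd (Fintype.card ι)) :
    M.det = 0 := by
  set D : Matrix ι ι R := diagonal fun i => if s i then 1 else -1
  have hDD : D * D = 1 := by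
    rw [diagonal_mul_diagonal, ← diagonal_one]
    congr 1 with i
    split_ifs <;> simp
  have hDMD : D * M * D = -M := by
    ext i j
    rw [mul_diagonal, diagonal_mul, neg_apply]
    by_cases hij : s i ↔ s j
    · simp [hM i j hij]
    · by_cases hi : s i <;> by_cases hj : s j <;> simp_all
  have hdet := congrArg det hDMD
  rw [det_neg, hodd.neg_one_pow, det_mul, det_mul, mul_right_comm, ← det_mul, hDD, det_one,
    one_mul, neg_one_mul] at hdet
  exact self_eq_neg.1 hdet

end Matrix

lemma principalMinor_eq_zero_of_card_lt {N : ℕ} {α : Type*} [Fintype α]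
    (E : Matrix (Fin N) (Fin N) ℝ) (cls : Fin N → α)
    (hE : ∀ i j, cls i = cls j → E i = E j)
    {T : Finset (Fin N)} (hT : Fintype.card α < T.card) : principalMinor E T = 0 :=
  det_eq_zero_of_card_lt_of_row_eq _ (cls ∘ T.orderEmbOfFin rfl)
    (fun i j h => by ext k; simp [hE _ _ h]) (by simpa using hT)

lemma principalMinor_eq_zero_of_bipartite {N : ℕ} (E : Matrix (Fin N) (Fin N) ℝ)
    (s : Fin N → Prop) [DecidablePred s] (hE : ∀ i j, (s i ↔ s j) → E i j = 0)
    {T : Finset (Fin N)} (hT : Odd T.card) : principalMinor E T = 0 :=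
  det_eq_zero_of_bipartite _ (s ∘ T.orderEmbOfFin rfl) (fun i j h => hE _ _ h)
    (by simpa using hT)

lemma det_diagonal_add_eq_of_principalMinor_eq_zero {N : ℕ} (hN : 3 ≤ N) (d : Fin N → ℝ)
    (E : Matrix (Fin N) (Fin N) ℝ)
    (hodd : ∀ T : Finset (Fin N), Odd T.card → principalMinor E T = 0)
    (hbig : ∀ T : Finset (Fin N), 4 < T.card → principalMinor E T = 0) :
    (diagonal d + E).det = (diagonal d).det + Sterm d E (N - 2) + Sterm d E (N - 4) := by
  have hsub : ({N, N - 2, N - 4} : Finset ℕ) ⊆ range (N + 1) := by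
    intro k hk; simp only [mem_insert, mem_singleton] at hk; simp only [mem_range]; omega
  have hvanish : ∀ k ∈ range (N + 1), k ∉ ({N, N - 2, N - 4} : Finset ℕ) →
      Sterm d E k = 0 := by
    intro k hk hk'
    simp only [mem_range, mem_insert, mem_singleton] at hk hk'
    refine Sterm_eq_zero d E fun T hT => ?_
    rcases Nat.even_or_odd T.card with ⟨r, hr⟩ | hT_odd
    · exact hbig T (by omega)
    · exact hodd T hT_odd
  rw [det_diagonal_add_eq_sum_Sterm, ← sum_subset hsub hvanish,
    sum_insert (by simp only [mem_insert, mem_singleton]; omega),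
    sum_insert (by simp only [mem_singleton]; omega), sum_singleton, Sterm_self, add_assoc]

section Qmat

variable {m n : ℕ} (z : Fin m → Fin n → ℝ)

lemma Qmat_sub_diagonal_apply_eq_zero {i j : Fin (m + n - 1)}
    (h : (i : ℕ) < m ↔ (j : ℕ) < m) :
    (Qmat z - diagonal fun k => Qmat z k k) i j = 0 := by
  by_cases hij : i = j
  · simp [hij]
  · rw [Matrix.sub_apply, diagonal_apply_ne _ hij, sub_zero]
    simp only [Qmat, of_apply]
    split_ifs <;> first | rfl | tauto

/-- Index `i < m` of `Qmat z` stands for row `i` of `z`, index `m + k` for column `k`. -/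
def qmatIndexClass {A B : Type*} (α : Fin m → A) (β : Fin n → B) (i : Fin (m + n - 1)) :
    A ⊕ B :=
  if h : (i : ℕ) < m then .inl (α ⟨i, h⟩)
  else .inr (β ⟨i - m, by have := i.isLt; omega⟩)

lemma Qmat_sub_diagonal_row_eq {A B : Type*} (g : A → B → ℝ) (α : Fin m → A)
    (β : Fin n → B) (hz : ∀ i k, z i k = g (α i) (β k)) {i j : Fin (m + n - 1)}
    (h : qmatIndexClass α β i = qmatIndexClass α β j) :
    (Qmat z - diagonal fun k => Qmat z k k) i = (Qmat z - diagonal fun k => Qmat z k k) j := by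
  ext t
  have hoff : ∀ k : Fin (m + n - 1), ((k : ℕ) < m ↔ ¬(t : ℕ) < m) →
      (Qmat z - diagonal fun l => Qmat z l l) k t = Qmat z k t := fun k hk => by
    rw [Matrix.sub_apply, diagonal_apply_ne _ (by rintro rfl; tauto), sub_zero]
  unfold qmatIndexClass at h
  by_cases hi : (i : ℕ) < m <;> by_cases hj : (j : ℕ) < m <;>
    simp only [hi, hj, dite_true, dite_false, Sum.inl.injEq, Sum.inr.injEq, reduceCtorEq] at h
  · by_cases ht : (t : ℕ) < m
    · rw [Qmat_sub_diagonal_apply_eq_zero z (by tauto),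
        Qmat_sub_diagonal_apply_eq_zero z (by tauto)]
    · rw [hoff i (by tauto), hoff j (by tauto)]
      simp only [Qmat, of_apply, hi, hj, ht, dite_true, dite_false, hz, h]
  · by_cases ht : (t : ℕ) < m
    · rw [hoff i (by tauto), hoff j (by tauto)]
      simp only [Qmat, of_apply, hi, hj, ht, dite_true, dite_false, hz, h]
    · rw [Qmat_sub_diagonal_apply_eq_zero z (by tauto),
        Qmat_sub_diagonal_apply_eq_zero z (by tauto)]

end Qmat

/-- For the block matrix `Z` of `M_{n,δ}(B,C)`-type margins, the determinant of the
associated matrix `Q` is `det A + S_{2(p+n)−3} + S_{2(p+n)−5}`: the only contributions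
beyond the product of diagonal entries come from `2×2` and `4×4` principal minors of the
off-diagonal part `E`. -/
theorem det_Q_diagonal_expansion_block (p n : ℕ) (hp : 1 ≤ p) (hn : 1 ≤ n)
    (a b c : ℝ)
    (Q : Matrix (Fin ((p + n) + (p + n) - 1)) (Fin ((p + n) + (p + n) - 1)) ℝ)
    (hQ : Q = Qmat (blockZ p n a b c))
    (E : Matrix (Fin ((p + n) + (p + n) - 1)) (Fin ((p + n) + (p + n) - 1)) ℝ)
    (hE : E = Q - Matrix.diagonal (fun i => Q i i)) :
    Q.det = (Matrix.diagonal (fun i => Q i i)).det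
        + Sterm (fun i => Q i i) E (2 * (p + n) - 3)
        + Sterm (fun i => Q i i) E (2 * (p + n) - 5) := by
  subst hQ hE
  set z := blockZ p n a b c
  have hodd : ∀ T, Odd T.card → principalMinor (Qmat z - diagonal fun i => Qmat z i i) T = 0 :=
    fun T => principalMinor_eq_zero_of_bipartite _ (fun i => (i : ℕ) < p + n)
      (fun _ _ => Qmat_sub_diagonal_apply_eq_zero z)
  have hbig :
      ∀ T, 4 < T.card → principalMinor (Qmat z - diagonal fun i => Qmat z i i) T = 0 := by
    let blockOf : Fin (p + n) → Bool := fun i => decide ((i : ℕ) < p)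
    let g : Bool → Bool → ℝ := fun x y =>
      if x then (if y then a else b) else (if y then b else c)
    have hz : ∀ i k, z i k = g (blockOf i) (blockOf k) := fun i k => by
      by_cases hi : (i : ℕ) < p <;> by_cases hk : (k : ℕ) < p <;>
        simp [z, blockZ, blockOf, g, hi, hk]
    exact fun T => principalMinor_eq_zero_of_card_lt _ (qmatIndexClass blockOf blockOf)
      (fun _ _ => Qmat_sub_diagonal_row_eq z g _ _ hz)
  rw [show 2 * (p + n) - 3 = p + n + (p + n) - 1 - 2 by omega,
    show 2 * (p + n) - 5 = p + n + (p + n) - 1 - 4 by omega,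
    ← det_diagonal_add_eq_of_principalMinor_eq_zero (by omega) _ _ hodd hbig, add_sub_cancel]
end

section
/- Let p ≥ 1 and n ≥ 2 be integers and x, y > 0 real numbers. Let Z be the (p+n)×n matrix whose first p rows have all entries equal to x and whose last n rows have all entries equal to y, and let Q be the (2n+p−1)×(2n+p−1) symmetric matrix associated to Z. With q1 = n x + n x², q2 = n y + n y², q3 = (p x + n y) + p x² + n y², one has the exact determinant formula: det Q = q1^{p}·q2^{n}·q3^{n−1} − p(n−1)·q1^{p−1}·q2^{n}·q3^{n−2}·(x + x²)² − n(n−1)·q1^{p}·q2^{n−1}·q3^{n−2}·(y + y²)². -/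
/-- The `(p+n) × n` matrix whose first `p` rows are constantly `x` and whose last `n`
rows are constantly `y`. -/
def rowZ (p n : ℕ) (x y : ℝ) : Fin (p + n) → Fin n → ℝ :=
  fun i _ => if (i : ℕ) < p then x else y


open Finset Matrix


lemma sum_ite3 (p m N : ℕ) (hpm : p ≤ m) (hmN : m ≤ N) (c1 c2 c3 : ℝ) :
    ∑ i : Fin N, (if (i : ℕ) < p then c1 else if (i : ℕ) < m then c2 else c3)
      = (p : ℝ) * c1 + ((m - p : ℕ) : ℝ) * c2 + ((N - m : ℕ) : ℝ) * c3 := by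
  rw [Fin.sum_univ_eq_sum_range (fun i => if i < p then c1 else if i < m then c2 else c3)]
  rw [Finset.range_eq_Ico, ← Finset.sum_Ico_consecutive _ (Nat.zero_le m) hmN,
      ← Finset.sum_Ico_consecutive _ (Nat.zero_le p) hpm]
  have h1 : ∑ i ∈ Finset.Ico 0 p, (if i < p then c1 else if i < m then c2 else c3)
      = (p : ℝ) * c1 := by
    rw [Finset.sum_congr rfl (g := fun _ => c1) fun i hi => by
      simp only [Finset.mem_Ico] at hi; simp [hi.2]]
    simp [mul_comm]
  have h2 : ∑ i ∈ Finset.Ico p m, (if i < p then c1 else if i < m then c2 else c3)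
      = ((m - p : ℕ) : ℝ) * c2 := by
    rw [Finset.sum_congr rfl (g := fun _ => c2) fun i hi => by
      simp only [Finset.mem_Ico] at hi; simp [hi.2, Nat.not_lt.mpr hi.1]]
    simp [mul_comm]
  have h3 : ∑ i ∈ Finset.Ico m N, (if i < p then c1 else if i < m then c2 else c3)
      = ((N - m : ℕ) : ℝ) * c3 := by
    rw [Finset.sum_congr rfl (g := fun _ => c3) fun i hi => by
      simp only [Finset.mem_Ico] at hi
      simp [Nat.not_lt.mpr hi.1, Nat.not_lt.mpr (le_trans hpm hi.1)]]
    simp [mul_comm]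
  rw [h1, h2, h3]

lemma prod_ite3 (p m N : ℕ) (hpm : p ≤ m) (hmN : m ≤ N) (c1 c2 c3 : ℝ) :
    ∏ i : Fin N, (if (i : ℕ) < p then c1 else if (i : ℕ) < m then c2 else c3)
      = c1 ^ p * c2 ^ (m - p) * c3 ^ (N - m) := by
  rw [Fin.prod_univ_eq_prod_range (fun i => if i < p then c1 else if i < m then c2 else c3)]
  rw [Finset.range_eq_Ico, ← Finset.prod_Ico_consecutive _ (Nat.zero_le m) hmN,
      ← Finset.prod_Ico_consecutive _ (Nat.zero_le p) hpm]
  have h1 : ∏ i ∈ Finset.Ico 0 p, (if i < p then c1 else if i < m then c2 else c3)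
      = c1 ^ p := by
    rw [Finset.prod_congr rfl (g := fun _ => c1) fun i hi => by
      simp only [Finset.mem_Ico] at hi; simp [hi.2]]
    simp
  have h2 : ∏ i ∈ Finset.Ico p m, (if i < p then c1 else if i < m then c2 else c3)
      = c2 ^ (m - p) := by
    rw [Finset.prod_congr rfl (g := fun _ => c2) fun i hi => by
      simp only [Finset.mem_Ico] at hi; simp [hi.2, Nat.not_lt.mpr hi.1]]
    simp
  have h3 : ∏ i ∈ Finset.Ico m N, (if i < p then c1 else if i < m then c2 else c3)
      = c3 ^ (N - m) := by
    rw [Finset.prod_congr rfl (g := fun _ => c3) fun i hi => by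
      simp only [Finset.mem_Ico] at hi
      simp [Nat.not_lt.mpr hi.1, Nat.not_lt.mpr (le_trans hpm hi.1)]]
    simp
  rw [h1, h2, h3]

noncomputable def dvec (p n : ℕ) (q1 q2 q3 : ℝ) : Fin ((p + n) + n - 1) → ℝ :=
  fun i => if (i : ℕ) < p then q1 else if (i : ℕ) < p + n then q2 else q3
noncomputable def Uvec (p n : ℕ) (a b : ℝ) : Fin ((p + n) + n - 1) → ℝ :=
  fun i => if (i : ℕ) < p then a else if (i : ℕ) < p + n then b else 0
noncomputable def Wvec (p n : ℕ) : Fin ((p + n) + n - 1) → ℝ :=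
  fun i => if (i : ℕ) < p + n then 0 else 1
noncomputable def Mmat (p n : ℕ) (a b : ℝ) : Matrix (Fin ((p + n) + n - 1)) (Fin 2) ℝ :=
  Matrix.of fun i j => if j = 0 then Uvec p n a b i else Wvec p n i
noncomputable def Bmat (p n : ℕ) (a b : ℝ) : Matrix (Fin 2) (Fin ((p + n) + n - 1)) ℝ :=
  Matrix.of fun i j => if i = 0 then Wvec p n j else Uvec p n a b j

lemma sum_row_const (p n : ℕ) (x y : ℝ) :
    ∑ l : Fin (p + n), ((if (l : ℕ) < p then x else y) + (if (l : ℕ) < p then x else y) ^ 2)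
      = (p : ℝ) * (x + x ^ 2) + (n : ℝ) * (y + y ^ 2) := by
  rw [Finset.sum_congr rfl (g := fun l : Fin (p + n) =>
      if (l : ℕ) < p then x + x ^ 2 else if (l : ℕ) < p + n then y + y ^ 2 else 0)
      fun l _ => by
        by_cases h1 : (l : ℕ) < p
        · simp [h1]
        · simp [h1, l.isLt]]
  rw [sum_ite3 p (p + n) (p + n) (Nat.le_add_right p n) le_rfl]
  simp

lemma Q_decomp (p n : ℕ) (hp : 1 ≤ p) (hn : 2 ≤ n) (x y q1 q2 q3 : ℝ)
    (hq1 : q1 = (n : ℝ) * x + (n : ℝ) * x ^ 2)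
    (hq2 : q2 = (n : ℝ) * y + (n : ℝ) * y ^ 2)
    (hq3 : q3 = ((p : ℝ) * x + (n : ℝ) * y) + (p : ℝ) * x ^ 2 + (n : ℝ) * y ^ 2) :
    Qmat (rowZ p n x y)
      = Matrix.diagonal (dvec p n q1 q2 q3)
        + Mmat p n (x + x ^ 2) (y + y ^ 2) * Bmat p n (x + x ^ 2) (y + y ^ 2) := by
  ext i j
  simp only [Matrix.add_apply, Matrix.mul_apply, Fin.sum_univ_two,
    Mmat, Bmat, Matrix.of_apply, Matrix.diagonal_apply, Qmat]
  simp only [show ((0 : Fin 2) = 0) = True from by simp, show ((1 : Fin 2) = 0) = False from by simp,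
    if_true, if_false]
  by_cases hi : (i : ℕ) < p + n
  · rw [dif_pos hi]
    by_cases hj : (j : ℕ) < p + n
    · rw [dif_pos hj]
      by_cases hij : i = j
      · subst hij
        rw [if_pos rfl, if_pos rfl]
        simp only [rowZ, Finset.sum_const, Finset.card_univ, Fintype.card_fin, nsmul_eq_mul,
          Uvec, Wvec, dvec, if_pos hi]
        split_ifs with h
        · rw [hq1]; ring
        · rw [hq2]; ring
      · rw [if_neg hij, if_neg hij]
        simp only [Wvec, if_pos hi, if_pos hj]
        ring
    · have hij : ¬ i = j := fun h => hj (h ▸ hi)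
      rw [dif_neg hj, if_neg hij]
      simp only [rowZ, Uvec, Wvec, if_pos hi, if_neg hj]
      split_ifs <;> ring
  · rw [dif_neg hi]
    by_cases hj : (j : ℕ) < p + n
    · have hij : ¬ i = j := fun h => hi (h ▸ hj)
      rw [dif_pos hj, if_neg hij]
      simp only [rowZ, Uvec, Wvec, if_pos hj, if_neg hi]
      split_ifs <;> ring
    · have hip : ¬ (i : ℕ) < p := fun h => hi (lt_of_lt_of_le h (Nat.le_add_right p n))
      rw [dif_neg hj]
      by_cases hij : i = j
      · subst hij
        rw [if_pos rfl, if_pos rfl]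
        simp only [rowZ, Uvec, Wvec, dvec, if_neg hi, if_neg hip]
        rw [sum_row_const p n x y, hq3]; ring
      · have hjp : ¬ (j : ℕ) < p := fun h => hj (lt_of_lt_of_le h (Nat.le_add_right p n))
        rw [if_neg hij, if_neg hij]
        simp only [Uvec, Wvec, dvec, if_neg hi, if_neg hip, if_neg hj, if_neg hjp]
        ring

theorem main_det (p n : ℕ) (hp : 1 ≤ p) (hn : 2 ≤ n)
    (x y : ℝ) (hx : 0 < x) (hy : 0 < y)
    (q1 q2 q3 : ℝ)
    (hq1 : q1 = (n : ℝ) * x + (n : ℝ) * x ^ 2)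
    (hq2 : q2 = (n : ℝ) * y + (n : ℝ) * y ^ 2)
    (hq3 : q3 = ((p : ℝ) * x + (n : ℝ) * y) + (p : ℝ) * x ^ 2 + (n : ℝ) * y ^ 2) :
    (Matrix.diagonal (dvec p n q1 q2 q3)
        + Mmat p n (x + x ^ 2) (y + y ^ 2) * Bmat p n (x + x ^ 2) (y + y ^ 2)).det
      = q1 ^ p * q2 ^ n * q3 ^ (n - 1)
        - (p : ℝ) * ((n : ℝ) - 1) * q1 ^ (p - 1) * q2 ^ n * q3 ^ (n - 2) * (x + x ^ 2) ^ 2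
        - (n : ℝ) * ((n : ℝ) - 1) * q1 ^ p * q2 ^ (n - 1) * q3 ^ (n - 2)
          * (y + y ^ 2) ^ 2 := by
  have hnR : (2 : ℝ) ≤ (n : ℝ) := by exact_mod_cast hn
  have hpR : (1 : ℝ) ≤ (p : ℝ) := by exact_mod_cast hp
  have hq1pos : 0 < q1 := by rw [hq1]; nlinarith [sq_nonneg x]
  have hq2pos : 0 < q2 := by rw [hq2]; nlinarith [sq_nonneg y]
  have hq3pos : 0 < q3 := by rw [hq3]; nlinarith [sq_nonneg x, sq_nonneg y]
  have hq1ne : q1 ≠ 0 := ne_of_gt hq1pos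
  have hq2ne : q2 ≠ 0 := ne_of_gt hq2pos
  have hq3ne : q3 ≠ 0 := ne_of_gt hq3pos
  have hd0 : ∀ i, dvec p n q1 q2 q3 i ≠ 0 := by
    intro i; unfold dvec; split_ifs <;> assumption
  set a := x + x ^ 2 with ha
  set b := y + y ^ 2 with hb
  set d := dvec p n q1 q2 q3 with hd
  set M := Mmat p n a b with hM
  set B := Bmat p n a b with hB
  set Dinv := Matrix.diagonal (fun i => (d i)⁻¹) with hDinvdef
  have hDD : Matrix.diagonal d * Dinv = 1 := by
    rw [hDinvdef, Matrix.diagonal_mul_diagonal]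
    have : (fun i => d i * (d i)⁻¹) = fun _ => (1 : ℝ) :=
      funext fun i => mul_inv_cancel₀ (hd0 i)
    rw [this, Matrix.diagonal_one]
  have hfac : Matrix.diagonal d + M * B
      = Matrix.diagonal d * (1 + Dinv * (M * B)) := by
    rw [Matrix.mul_add, Matrix.mul_one, ← Matrix.mul_assoc, hDD, Matrix.one_mul]
  rw [hfac, Matrix.det_mul]
  -- determinant of the diagonal part
  have hdetD : (Matrix.diagonal d).det = q1 ^ p * q2 ^ n * q3 ^ (n - 1) := by
    rw [Matrix.det_diagonal, hd]
    unfold dvec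
    rw [prod_ite3 p (p + n) ((p + n) + n - 1) (Nat.le_add_right p n) (by omega)]
    rw [show p + n - p = n from by omega, show (p + n) + n - 1 - (p + n) = n - 1 from by omega]
  -- determinant of the 2×2 part
  have hG : (1 + Dinv * (M * B)).det
      = 1 - (((n : ℝ) - 1) * q3⁻¹)
          * ((p : ℝ) * (a * (q1⁻¹ * a)) + (n : ℝ) * (b * (q2⁻¹ * b))) := by
    rw [← Matrix.mul_assoc, Matrix.det_one_add_mul_comm, Matrix.det_fin_two]
    have hent : ∀ (i : Fin 2) (j : Fin 2), (B * (Dinv * M)) i j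
        = ∑ k : Fin ((p + n) + n - 1), B i k * ((d k)⁻¹ * M k j) := by
      intro i j
      rw [Matrix.mul_apply]
      exact Finset.sum_congr rfl fun k _ => by rw [hDinvdef, Matrix.diagonal_mul]
    have e00 : (B * (Dinv * M)) 0 0 = 0 := by
      rw [hent]
      refine Finset.sum_eq_zero fun k _ => ?_
      simp only [hB, hM, Bmat, Mmat, Matrix.of_apply, if_pos rfl, Wvec, Uvec]
      by_cases hk : (k : ℕ) < p + n
      · simp [hk]
      · have hkp : ¬ (k : ℕ) < p := fun h => hk (lt_of_lt_of_le h (Nat.le_add_right p n))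
        simp [hk, hkp]
    have e11 : (B * (Dinv * M)) 1 1 = 0 := by
      rw [hent]
      refine Finset.sum_eq_zero fun k _ => ?_
      simp only [hB, hM, Bmat, Mmat, Matrix.of_apply, Wvec, Uvec,
        show ((1 : Fin 2) = 0) = False from by simp, if_false]
      by_cases hk : (k : ℕ) < p + n
      · simp [hk]
      · have hkp : ¬ (k : ℕ) < p := fun h => hk (lt_of_lt_of_le h (Nat.le_add_right p n))
        simp [hk, hkp]
    have e01 : (B * (Dinv * M)) 0 1 = ((n : ℝ) - 1) * q3⁻¹ := by
      rw [hent]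
      rw [Finset.sum_congr rfl (g := fun k : Fin ((p + n) + n - 1) =>
          if (k : ℕ) < p then 0 else if (k : ℕ) < p + n then 0 else q3⁻¹)
          fun k _ => ?_]
      · rw [sum_ite3 p (p + n) ((p + n) + n - 1) (Nat.le_add_right p n) (by omega)]
        rw [show ((p + n) + n - 1 - (p + n) : ℕ) = n - 1 from by omega,
          Nat.cast_sub (by omega : 1 ≤ n)]
        push_cast
        ring
      · simp only [hB, hM, Bmat, Mmat, Matrix.of_apply, if_pos rfl, Wvec, hd]
        unfold dvec
        simp only [show ((1 : Fin 2) = 0) = False from by simp, if_false]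
        by_cases hk : (k : ℕ) < p + n
        · simp [hk]
        · have hkp : ¬ (k : ℕ) < p := fun h => hk (lt_of_lt_of_le h (Nat.le_add_right p n))
          simp [hk, hkp]
    have e10 : (B * (Dinv * M)) 1 0 = (p : ℝ) * (a * (q1⁻¹ * a)) + (n : ℝ) * (b * (q2⁻¹ * b)) := by
      rw [hent]
      rw [Finset.sum_congr rfl (g := fun k : Fin ((p + n) + n - 1) =>
          if (k : ℕ) < p then a * (q1⁻¹ * a) else if (k : ℕ) < p + n then b * (q2⁻¹ * b) else 0)
          fun k _ => ?_]
      · rw [sum_ite3 p (p + n) ((p + n) + n - 1) (Nat.le_add_right p n) (by omega)]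
        simp
      · simp only [hB, hM, Bmat, Mmat, Matrix.of_apply, if_pos rfl, Uvec, hd,
          show ((1 : Fin 2) = 0) = False from by simp, if_false]
        unfold dvec
        by_cases hkp : (k : ℕ) < p
        · simp [hkp]
        · by_cases hk : (k : ℕ) < p + n
          · simp [hkp, hk]
          · simp [hkp, hk]
    simp only [Matrix.add_apply, Matrix.one_apply_eq, Matrix.one_apply_ne (by decide : (0 : Fin 2) ≠ 1),
      Matrix.one_apply_ne (by decide : (1 : Fin 2) ≠ 0), e00, e11, e01, e10]
    ring
  rw [hdetD, hG]
  -- final algebra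
  have ep : q1 ^ p = q1 ^ (p - 1) * q1 := by
    conv_lhs => rw [show p = (p - 1) + 1 by omega]
    rw [pow_succ]
  have en : q2 ^ n = q2 ^ (n - 1) * q2 := by
    conv_lhs => rw [show n = (n - 1) + 1 by omega]
    rw [pow_succ]
  have e3 : q3 ^ (n - 1) = q3 ^ (n - 2) * q3 := by
    conv_lhs => rw [show n - 1 = (n - 2) + 1 by omega]
    rw [pow_succ]
  simp only [ep, en, e3]
  field_simp
  ring

/-- Exact determinant formula for the matrix `Q` associated to the row-constant matrix
`Z`: with `q1 = nx + nx²`, `q2 = ny + ny²`, `q3 = (px + ny) + px² + ny²`,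
`det Q = q1^p q2^n q3^{n−1} − p(n−1) q1^{p−1} q2^n q3^{n−2} (x+x²)²
− n(n−1) q1^p q2^{n−1} q3^{n−2} (y+y²)²`. -/
theorem det_Q_rowConstant (p n : ℕ) (hp : 1 ≤ p) (hn : 2 ≤ n)
    (x y : ℝ) (hx : 0 < x) (hy : 0 < y)
    (Q : Matrix (Fin ((p + n) + n - 1)) (Fin ((p + n) + n - 1)) ℝ)
    (hQ : Q = Qmat (rowZ p n x y))
    (q1 q2 q3 : ℝ)
    (hq1 : q1 = (n : ℝ) * x + (n : ℝ) * x ^ 2)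
    (hq2 : q2 = (n : ℝ) * y + (n : ℝ) * y ^ 2)
    (hq3 : q3 = ((p : ℝ) * x + (n : ℝ) * y) + (p : ℝ) * x ^ 2 + (n : ℝ) * y ^ 2) :
    Q.det = q1 ^ p * q2 ^ n * q3 ^ (n - 1)
        - (p : ℝ) * ((n : ℝ) - 1) * q1 ^ (p - 1) * q2 ^ n * q3 ^ (n - 2) * (x + x ^ 2) ^ 2
        - (n : ℝ) * ((n : ℝ) - 1) * q1 ^ p * q2 ^ (n - 1) * q3 ^ (n - 2)
          * (y + y ^ 2) ^ 2 := by
  rw [hQ, Q_decomp p n hp hn x y q1 q2 q3 hq1 hq2 hq3]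
  exact main_det p n hp hn x y hx hy q1 q2 q3 hq1 hq2 hq3
end
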